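/- arXiv:2301.01179 — 3 statements merged into one kernel-verified Lean document; each statement's English description precedes it below -/
import Mathlib

section
/- For smooth G and polynomial source moments, the S2L identity holds: if Φ(Δr, Δz) = Σ_{i,j} S_{ij} · (1/(i! j!)) ∂^{i+j}G/∂r₁^i ∂z₁^j evaluated via Taylor expansion in the field variables, then the coefficients of the local expansion Φ(r+Δr, z+Δz) = Σ_{k,ℓ} Φ_{kℓ} (Δr)^k (Δz)^ℓ are given by Φ_{kℓ} = Σ_{i,j} (−1)^j C(j+ℓ, j) S_{ij} Ḡ_{k,i,j+ℓ}, where Ḡ_{a,b,c} = (1/(a! b! c!)) ∂^{a+b+c}G/∂r^a ∂r₁^b ∂x^c and x = z − z₁. -/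
open Finset in
lemma key_binom (N : ℕ) (f : ℕ → ℝ) (hf : ∀ s, N ≤ s → f s = 0) (a b : ℝ) :
    ∑ s ∈ range N, f s * (a + b) ^ s
      = ∑ ℓ ∈ range N, ∑ j ∈ range N,
          (Nat.choose (j + ℓ) j : ℝ) * f (j + ℓ) * a ^ j * b ^ ℓ := by
  classical
  have hRHS : (∑ ℓ ∈ range N, ∑ j ∈ range N,
          (Nat.choose (j + ℓ) j : ℝ) * f (j + ℓ) * a ^ j * b ^ ℓ)
      = ∑ x ∈ (range N ×ˢ range N).filter (fun x => x.2 + x.1 < N),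
          (Nat.choose (x.2 + x.1) x.2 : ℝ) * f (x.2 + x.1) * a ^ x.2 * b ^ x.1 := by
    rw [← Finset.sum_product', Finset.sum_filter]
    refine Finset.sum_congr rfl fun x _ => ?_
    by_cases h : x.2 + x.1 < N
    · simp [h]
    · simp [h, hf _ (le_of_not_gt h)]
  have hLHS : (∑ s ∈ range N, f s * (a + b) ^ s)
      = ∑ x ∈ (range N).sigma (fun s => range (s+1)),
          f x.1 * (a ^ x.2 * b ^ (x.1 - x.2) * (Nat.choose x.1 x.2 : ℝ)) := by
    rw [Finset.sum_sigma]
    exact Finset.sum_congr rfl fun s _ => by rw [add_pow, Finset.mul_sum]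
  rw [hLHS, hRHS]
  refine Finset.sum_nbij' (i := fun x => (x.1 - x.2, x.2)) (j := fun y => ⟨y.2 + y.1, y.2⟩)
    ?_ ?_ ?_ ?_ ?_
  · rintro ⟨s, j⟩ hx
    simp only [Finset.mem_sigma, Finset.mem_range] at hx
    simp only [Finset.mem_filter, Finset.mem_product, Finset.mem_range]
    omega
  · rintro ⟨ℓ, j⟩ hy
    simp only [Finset.mem_filter, Finset.mem_product, Finset.mem_range] at hy
    simp only [Finset.mem_sigma, Finset.mem_range]
    omega
  · rintro ⟨s, j⟩ hx
    simp only [Finset.mem_sigma, Finset.mem_range] at hx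
    simp only [Sigma.mk.inj_iff]
    constructor
    · omega
    · rfl
  · rintro ⟨ℓ, j⟩ hy
    have : j + ℓ - j = ℓ := by omega
    simp [this]
  · rintro ⟨s, j⟩ hx
    simp only [Finset.mem_sigma, Finset.mem_range] at hx
    have h1 : j + (s - j) = s := by omega
    rw [h1]
    ring


open Finset in
/-- Source-to-local (S2L) identity of the FMM: the potential at a shifted field point
`(r + Δr, z + Δz)` due to sources at displacements `(Δr₁ t, Δz₁ t)` with weights `w t`,
where the Green's function is given by its (truncated) Taylor polynomial with scaled
coefficients `Gb a b c` in the variables `(Δr, Δr₁, Δx)` and `x = z - z₁`, has local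
expansion coefficients `Φ k ℓ = Σ_{i,j} (−1)^j C(j+ℓ,j) S i j * Gb k i (j+ℓ)`. -/
theorem fmm_s2l (N : ℕ) (Gb : ℕ → ℕ → ℕ → ℝ)
    (hGb : ∀ p q s, N ≤ s → Gb p q s = 0)
    (m : ℕ) (w Δr₁ Δz₁ : Fin m → ℝ)
    (S : ℕ → ℕ → ℝ)
    (hS : ∀ i j, S i j = ∑ t : Fin m, w t * (Δr₁ t) ^ i * (Δz₁ t) ^ j)
    (Φ : ℕ → ℕ → ℝ)
    (hΦ : ∀ k ℓ, Φ k ℓ =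
      ∑ i ∈ range N, ∑ j ∈ range N,
        (-1 : ℝ) ^ j * (Nat.choose (j + ℓ) j : ℝ) * S i j * Gb k i (j + ℓ)) :
    ∀ Δr Δz : ℝ,
      (∑ t : Fin m, w t *
          ∑ p ∈ range N, ∑ q ∈ range N, ∑ s ∈ range N,
            Gb p q s * Δr ^ p * (Δr₁ t) ^ q * (Δz - Δz₁ t) ^ s) =
        ∑ k ∈ range N, ∑ ℓ ∈ range N, Φ k ℓ * Δr ^ k * Δz ^ ℓ := by
  intro Δr Δz
  have hkey : ∀ (t : Fin m) (p q : ℕ),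
      (∑ s ∈ range N, Gb p q s * Δr ^ p * (Δr₁ t) ^ q * (Δz - Δz₁ t) ^ s)
      = ∑ ℓ ∈ range N, ∑ j ∈ range N,
          (Nat.choose (j + ℓ) j : ℝ) * (Gb p q (j + ℓ) * Δr ^ p * (Δr₁ t) ^ q)
            * (-(Δz₁ t)) ^ j * Δz ^ ℓ := by
    intro t p q
    have h := key_binom N (fun s => Gb p q s * Δr ^ p * (Δr₁ t) ^ q)
      (fun s hs => by simp [hGb p q s hs]) (-(Δz₁ t)) Δz
    simpa [neg_add_eq_sub] using h
  simp_rw [hkey, hΦ, hS]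
  simp only [Finset.mul_sum, Finset.sum_mul]
  conv_lhs => rw [Finset.sum_comm]
  conv_lhs => enter [2, k]; rw [Finset.sum_comm]
  conv_lhs => enter [2, k, 2, q]; rw [Finset.sum_comm]
  conv_lhs => enter [2, k, 2, q, 2, l]; rw [Finset.sum_comm]
  conv_lhs => enter [2, k]; rw [Finset.sum_comm]
  refine Finset.sum_congr rfl fun k _ => Finset.sum_congr rfl fun l _ =>
    Finset.sum_congr rfl fun q _ => Finset.sum_congr rfl fun j _ =>
    Finset.sum_congr rfl fun t _ => ?_
  rw [neg_pow]
  ring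
end

section
/- Suppose G : ℝ³ → ℝ is smooth and satisfies (1/r) ∂_r(r ∂_r G) − (n²/r²) G + ∂_x² G = 0 on a neighborhood of a point with r > 0. Then the scaled Taylor coefficients Ḡ_{ijk} = (1/(i!j!k!)) ∂_r^i ∂_{r₁}^j ∂_x^k G satisfy, for all i, j, k ≥ 0: Ḡ_{i+2,j,k} = Σ_{u=0}^{i} ((−1)^u / r^{u+1}) · (1/((i+1)(i+2))) · [ ((u+1) n² / r) Ḡ_{i−u,j,k} − (i−u+1) Ḡ_{i−u+1,j,k} − (binomial-weighted second x-derivative terms) ]; in particular (taking k-derivative terms included) the recursion Ḡ_{i+2,j,k} = Σ_{u=0}^{i} ((−1)^u/r^{u+1}) (1/((i+1)(i+2))) [ ((u+1)n²/r) Ḡ_{i−u,j,k} − (i−u+1) Ḡ_{i−u+1,j,k} ] − ((k+1)(k+2)/((i+1)(i+2))) Ḡ_{i,j,k+2} holds whenever the Laplace equation ∂_r²G + (1/r)∂_r G − (n²/r²)G + ∂_x²G = 0 holds identically near the point. -/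
namespace TaylorRec
open Finset


noncomputable def pd (v : ℝ × ℝ × ℝ) (f : ℝ × ℝ × ℝ → ℝ) : ℝ × ℝ × ℝ → ℝ :=
  fun p => fderiv ℝ f p v

lemma contDiff_pd (v : ℝ × ℝ × ℝ) {f : ℝ × ℝ × ℝ → ℝ} (hf : ContDiff ℝ (⊤:ℕ∞) f) :
    ContDiff ℝ (⊤:ℕ∞) (pd v f) :=
  (hf.fderiv_right (by simp)).clm_apply contDiff_const

lemma contDiff_pd_iter (v : ℝ × ℝ × ℝ) {f : ℝ × ℝ × ℝ → ℝ} (hf : ContDiff ℝ (⊤:ℕ∞) f) (m : ℕ) :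
    ContDiff ℝ (⊤:ℕ∞) ((pd v)^[m] f) := by
  induction m generalizing f with
  | zero => exact hf
  | succ m ih => rw [Function.iterate_succ_apply]; exact ih (contDiff_pd v hf)

lemma diff_of {f : ℝ × ℝ × ℝ → ℝ} (hf : ContDiff ℝ (⊤:ℕ∞) f) : Differentiable ℝ f :=
  hf.differentiable (by simp)

lemma hasDerivAt_line1 {f : ℝ × ℝ × ℝ → ℝ} (hf : Differentiable ℝ f) (a b c : ℝ) :
    HasDerivAt (fun t => f (t, b, c)) (pd (1,0,0) f (a,b,c)) a := by
  have hc : HasDerivAt (fun t : ℝ => ((t, b, c) : ℝ × ℝ × ℝ)) (((1:ℝ),(0:ℝ),(0:ℝ))) a :=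
    (hasDerivAt_id a).prodMk ((hasDerivAt_const a b).prodMk (hasDerivAt_const a c))
  exact (hf (a,b,c)).hasFDerivAt.comp_hasDerivAt a hc

lemma hasDerivAt_line2 {f : ℝ × ℝ × ℝ → ℝ} (hf : Differentiable ℝ f) (a b c : ℝ) :
    HasDerivAt (fun t => f (a, t, c)) (pd (0,1,0) f (a,b,c)) b := by
  have hc : HasDerivAt (fun t : ℝ => ((a, t, c) : ℝ × ℝ × ℝ)) (((0:ℝ),(1:ℝ),(0:ℝ))) b :=
    (hasDerivAt_const b a).prodMk ((hasDerivAt_id b).prodMk (hasDerivAt_const b c))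
  exact (hf (a,b,c)).hasFDerivAt.comp_hasDerivAt b hc

lemma hasDerivAt_line3 {f : ℝ × ℝ × ℝ → ℝ} (hf : Differentiable ℝ f) (a b c : ℝ) :
    HasDerivAt (fun t => f (a, b, t)) (pd (0,0,1) f (a,b,c)) c := by
  have hc : HasDerivAt (fun t : ℝ => ((a, b, t) : ℝ × ℝ × ℝ)) (((0:ℝ),(0:ℝ),(1:ℝ))) c :=
    (hasDerivAt_const c a).prodMk ((hasDerivAt_const c b).prodMk (hasDerivAt_id c))
  exact (hf (a,b,c)).hasFDerivAt.comp_hasDerivAt c hc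

lemma iteratedDeriv_line1 {f : ℝ × ℝ × ℝ → ℝ} (hf : ContDiff ℝ (⊤:ℕ∞) f) (m : ℕ) (a b c : ℝ) :
    iteratedDeriv m (fun t => f (t,b,c)) a = (pd (1,0,0))^[m] f (a,b,c) := by
  induction m generalizing f with
  | zero => simp
  | succ m ih =>
    rw [iteratedDeriv_succ',
      show deriv (fun t => f (t,b,c)) = fun t => pd (1,0,0) f (t,b,c) from
        funext fun t => (hasDerivAt_line1 (diff_of hf) t b c).deriv,
      ih (contDiff_pd _ hf), Function.iterate_succ_apply]

lemma iteratedDeriv_line2 {f : ℝ × ℝ × ℝ → ℝ} (hf : ContDiff ℝ (⊤:ℕ∞) f) (m : ℕ) (a b c : ℝ) :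
    iteratedDeriv m (fun t => f (a,t,c)) b = (pd (0,1,0))^[m] f (a,b,c) := by
  induction m generalizing f with
  | zero => simp
  | succ m ih =>
    rw [iteratedDeriv_succ',
      show deriv (fun t => f (a,t,c)) = fun t => pd (0,1,0) f (a,t,c) from
        funext fun t => (hasDerivAt_line2 (diff_of hf) a t c).deriv,
      ih (contDiff_pd _ hf), Function.iterate_succ_apply]

lemma iteratedDeriv_line3 {f : ℝ × ℝ × ℝ → ℝ} (hf : ContDiff ℝ (⊤:ℕ∞) f) (m : ℕ) (a b c : ℝ) :
    iteratedDeriv m (fun t => f (a,b,t)) c = (pd (0,0,1))^[m] f (a,b,c) := by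
  induction m generalizing f with
  | zero => simp
  | succ m ih =>
    rw [iteratedDeriv_succ',
      show deriv (fun t => f (a,b,t)) = fun t => pd (0,0,1) f (a,b,t) from
        funext fun t => (hasDerivAt_line3 (diff_of hf) a b t).deriv,
      ih (contDiff_pd _ hf), Function.iterate_succ_apply]

lemma pd_comm {f : ℝ × ℝ × ℝ → ℝ} (hf : ContDiff ℝ (⊤:ℕ∞) f) (v w : ℝ × ℝ × ℝ) (p : ℝ × ℝ × ℝ) :
    pd v (pd w f) p = pd w (pd v f) p := by
  have h1 : ∀ q, HasFDerivAt f (fderiv ℝ f q) q := fun q => ((diff_of hf) q).hasFDerivAt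
  have hsm : ContDiff ℝ (⊤:ℕ∞) (fderiv ℝ f) := hf.fderiv_right (by simp)
  have h2 : HasFDerivAt (fderiv ℝ f) (fderiv ℝ (fderiv ℝ f) p) p :=
    ((hsm.differentiable (by simp)) p).hasFDerivAt
  have key : ∀ u : ℝ × ℝ × ℝ,
      pd u (pd w f) p = fderiv ℝ (fderiv ℝ f) p u w := by
    intro u
    have hw : HasFDerivAt (fun q => fderiv ℝ f q w)
        ((ContinuousLinearMap.apply ℝ ℝ w).comp (fderiv ℝ (fderiv ℝ f) p)) p := by
      exact ((ContinuousLinearMap.apply ℝ ℝ w).hasFDerivAt).comp p h2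
    have heq : fderiv ℝ (pd w f) p
        = (ContinuousLinearMap.apply ℝ ℝ w).comp (fderiv ℝ (fderiv ℝ f) p) := hw.fderiv
    show fderiv ℝ (pd w f) p u = _
    rw [heq]; rfl
  have key' : ∀ u : ℝ × ℝ × ℝ,
      pd u (pd v f) p = fderiv ℝ (fderiv ℝ f) p u v := by
    intro u
    have hw : HasFDerivAt (fun q => fderiv ℝ f q v)
        ((ContinuousLinearMap.apply ℝ ℝ v).comp (fderiv ℝ (fderiv ℝ f) p)) p :=
      ((ContinuousLinearMap.apply ℝ ℝ v).hasFDerivAt).comp p h2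
    have heq : fderiv ℝ (pd v f) p
        = (ContinuousLinearMap.apply ℝ ℝ v).comp (fderiv ℝ (fderiv ℝ f) p) := hw.fderiv
    show fderiv ℝ (pd v f) p u = _
    rw [heq]; rfl
  rw [key v, key' w]
  exact second_derivative_symmetric h1 h2 v w

lemma pd_iter_comm {f : ℝ × ℝ × ℝ → ℝ} (hf : ContDiff ℝ (⊤:ℕ∞) f) (v w : ℝ × ℝ × ℝ) (m : ℕ) :
    pd v ((pd w)^[m] f) = (pd w)^[m] (pd v f) := by
  induction m generalizing f with
  | zero => rfl
  | succ m ih =>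
    rw [Function.iterate_succ_apply, Function.iterate_succ_apply,
      ih (contDiff_pd w hf)]
    congr 1
    exact funext (pd_comm hf v w)




/-- The modal Laplace operator expression. -/
noncomputable def LP (c : ℝ) (g : ℝ × ℝ × ℝ → ℝ) : ℝ × ℝ × ℝ → ℝ :=
  fun p => pd (1,0,0) (pd (1,0,0) g) p + (p.1)⁻¹ * pd (1,0,0) g p
    - c * ((p.1)^2)⁻¹ * g p + pd (0,0,1) (pd (0,0,1) g) p

lemma pd_congr_on {s : Set (ℝ × ℝ × ℝ)} (hs : IsOpen s) {F₁ F₂ : ℝ × ℝ × ℝ → ℝ}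
    (h : ∀ q ∈ s, F₁ q = F₂ q) (v : ℝ × ℝ × ℝ) {p} (hp : p ∈ s) :
    pd v F₁ p = pd v F₂ p := by
  have hev : F₁ =ᶠ[nhds p] F₂ :=
    Filter.eventuallyEq_of_mem (hs.mem_nhds hp) h
  simp only [pd, hev.fderiv_eq]

lemma pd_iter_congr_on {s : Set (ℝ × ℝ × ℝ)} (hs : IsOpen s) (v : ℝ × ℝ × ℝ) (m : ℕ)
    {F₁ F₂ : ℝ × ℝ × ℝ → ℝ} (h : ∀ q ∈ s, F₁ q = F₂ q) :
    ∀ p ∈ s, (pd v)^[m] F₁ p = (pd v)^[m] F₂ p := by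
  induction m generalizing F₁ F₂ with
  | zero => exact h
  | succ m ih =>
    intro p hp
    rw [Function.iterate_succ_apply, Function.iterate_succ_apply]
    exact ih (fun q hq => pd_congr_on hs h v hq) p hp

lemma pd_iter_zero_on {s : Set (ℝ × ℝ × ℝ)} (hs : IsOpen s) (v : ℝ × ℝ × ℝ) (m : ℕ)
    {F : ℝ × ℝ × ℝ → ℝ} (h : ∀ q ∈ s, F q = 0) : ∀ p ∈ s, (pd v)^[m] F p = 0 := by
  intro p hp
  have h0 : ∀ k : ℕ, (pd v)^[k] (fun _ : ℝ × ℝ × ℝ => (0:ℝ)) = fun _ => (0:ℝ) := by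
    intro k
    induction k with
    | zero => rfl
    | succ k ihk =>
      rw [Function.iterate_succ_apply]
      have : pd v (fun _ : ℝ × ℝ × ℝ => (0:ℝ)) = fun _ => (0:ℝ) := by
        funext q; simp [pd]
      rw [this, ihk]
  have := pd_iter_congr_on hs v m (F₂ := fun _ => (0:ℝ)) h p hp
  rw [this, h0]

/-- Differentiating the Laplace expression in a direction with vanishing first component. -/
lemma pd_LP {c : ℝ} (v : ℝ × ℝ × ℝ) (hv : v.1 = 0) {g : ℝ × ℝ × ℝ → ℝ}
    (hg : ContDiff ℝ (⊤:ℕ∞) g) {p : ℝ × ℝ × ℝ} (hp : p.1 ≠ 0) :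
    pd v (LP c g) p = LP c (pd v g) p := by
  -- pieces
  have hg1 : ContDiff ℝ (⊤:ℕ∞) (pd (1,0,0) g) := contDiff_pd _ hg
  have hg11 : ContDiff ℝ (⊤:ℕ∞) (pd (1,0,0) (pd (1,0,0) g)) := contDiff_pd _ hg1
  have hg3 : ContDiff ℝ (⊤:ℕ∞) (pd (0,0,1) g) := contDiff_pd _ hg
  have hg33 : ContDiff ℝ (⊤:ℕ∞) (pd (0,0,1) (pd (0,0,1) g)) := contDiff_pd _ hg3
  -- derivative of q ↦ (q.1)⁻¹
  have hinv : HasFDerivAt (fun q : ℝ × ℝ × ℝ => (q.1)⁻¹)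
      ((-((p.1)^2)⁻¹ : ℝ) • ContinuousLinearMap.fst ℝ ℝ (ℝ × ℝ)) p :=
    (hasDerivAt_inv hp).comp_hasFDerivAt p hasFDerivAt_fst
  -- derivative of q ↦ ((q.1)^2)⁻¹
  have hinv2 : HasFDerivAt (fun q : ℝ × ℝ × ℝ => ((q.1)^2)⁻¹)
      (((-2 : ℝ) * (p.1)^(-3 : ℤ)) • ContinuousLinearMap.fst ℝ ℝ (ℝ × ℝ)) p := by
    have h1 : HasDerivAt (fun x : ℝ => x ^ (-2 : ℤ)) (((-2 : ℤ) : ℝ) * p.1 ^ (-2 - 1 : ℤ)) p.1 :=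
      hasDerivAt_zpow (-2) p.1 (Or.inl hp)
    have h2 : HasFDerivAt ((fun x : ℝ => x ^ (-2 : ℤ)) ∘ (Prod.fst : ℝ × ℝ × ℝ → ℝ))
        ((((-2 : ℤ) : ℝ) * p.1 ^ (-2 - 1 : ℤ)) • ContinuousLinearMap.fst ℝ ℝ (ℝ × ℝ)) p :=
      h1.comp_hasFDerivAt p hasFDerivAt_fst
    have : (fun q : ℝ × ℝ × ℝ => ((q.1)^2)⁻¹) = (fun x : ℝ => x ^ (-2 : ℤ)) ∘ Prod.fst := by
      funext q; simp [zpow_neg]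
    rw [this]
    convert h2 using 2 <;> norm_num
  have hderivg : HasFDerivAt g (fderiv ℝ g p) p := ((diff_of hg) p).hasFDerivAt
  have hderivg1 : HasFDerivAt (pd (1,0,0) g) (fderiv ℝ (pd (1,0,0) g) p) p :=
    ((diff_of hg1) p).hasFDerivAt
  have hA : HasFDerivAt (pd (1,0,0) (pd (1,0,0) g))
      (fderiv ℝ (pd (1,0,0) (pd (1,0,0) g)) p) p := ((diff_of hg11) p).hasFDerivAt
  have hD : HasFDerivAt (pd (0,0,1) (pd (0,0,1) g))
      (fderiv ℝ (pd (0,0,1) (pd (0,0,1) g)) p) p := ((diff_of hg33) p).hasFDerivAt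
  have hB : HasFDerivAt (fun q : ℝ × ℝ × ℝ => (q.1)⁻¹ * pd (1,0,0) g q)
      ((p.1)⁻¹ • fderiv ℝ (pd (1,0,0) g) p
        + (pd (1,0,0) g p) • ((-((p.1)^2)⁻¹ : ℝ) • ContinuousLinearMap.fst ℝ ℝ (ℝ × ℝ))) p :=
    hinv.mul hderivg1
  have hCc : HasFDerivAt (fun q : ℝ × ℝ × ℝ => c * ((q.1)^2)⁻¹ * g q)
      ((c * ((p.1)^2)⁻¹) • fderiv ℝ g p
        + (g p) • (c • (((-2 : ℝ) * (p.1)^(-3 : ℤ)) • ContinuousLinearMap.fst ℝ ℝ (ℝ × ℝ)))) p := by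
    have hc2 : HasFDerivAt (fun q : ℝ × ℝ × ℝ => c * ((q.1)^2)⁻¹)
        (c • (((-2 : ℝ) * (p.1)^(-3 : ℤ)) • ContinuousLinearMap.fst ℝ ℝ (ℝ × ℝ))) p :=
      hinv2.const_mul c
    exact hc2.mul hderivg
  have hall := ((hA.add hB).sub hCc).add hD
  have hLP : HasFDerivAt (LP c g) _ p := hall
  have := hLP.fderiv
  show fderiv ℝ (LP c g) p v = _
  rw [this]
  simp only [ContinuousLinearMap.add_apply, ContinuousLinearMap.sub_apply,
    ContinuousLinearMap.smul_apply, ContinuousLinearMap.coe_fst', smul_eq_mul, hv, mul_zero,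
    LP]
  have e1 : fderiv ℝ (pd (1,0,0) (pd (1,0,0) g)) p v
      = pd (1,0,0) (pd (1,0,0) (pd v g)) p := by
    show pd v (pd (1,0,0) (pd (1,0,0) g)) p = _
    rw [pd_comm hg1 v (1,0,0) p]
    congr 1
    funext q
    exact pd_comm hg v (1,0,0) q
  have e2 : fderiv ℝ (pd (1,0,0) g) p v = pd (1,0,0) (pd v g) p := pd_comm hg v (1,0,0) p
  have e3 : fderiv ℝ g p v = pd v g p := rfl
  have e4 : fderiv ℝ (pd (0,0,1) (pd (0,0,1) g)) p v
      = pd (0,0,1) (pd (0,0,1) (pd v g)) p := by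
    show pd v (pd (0,0,1) (pd (0,0,1) g)) p = _
    rw [pd_comm hg3 v (0,0,1) p]
    congr 1
    funext q
    exact pd_comm hg v (0,0,1) q
  rw [e1, e2, e3, e4]
  ring


lemma pascal_sum (i : ℕ) (a b : ℕ → ℝ) :
    ∑ u ∈ range (i+1), (i.choose u : ℝ) * (a (u+1) * b (i-u) + a u * b (i-u+1))
      = ∑ u ∈ range (i+2), ((i+1).choose u : ℝ) * (a u * b (i+1-u)) := by
  have key : ∑ u ∈ range (i+2), (i.choose u : ℝ) * (a u * b (i+1-u))
      = ∑ u ∈ range (i+1), (i.choose (u+1) : ℝ) * (a (u+1) * b (i-u)) + a 0 * b (i+1) := by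
    rw [Finset.sum_range_succ']
    simp [Nat.succ_sub_succ]
  have key2 : ∑ u ∈ range (i+2), (i.choose u : ℝ) * (a u * b (i+1-u))
      = ∑ u ∈ range (i+1), (i.choose u : ℝ) * (a u * b (i+1-u)) := by
    rw [Finset.sum_range_succ]
    simp
  rw [Finset.sum_range_succ' (fun u => ((i+1).choose u : ℝ) * (a u * b (i+1-u))) (i+1)]
  have e1 : ∀ u ∈ range (i+1), ((i+1).choose (u+1) : ℝ) * (a (u+1) * b (i+1-(u+1)))
      = (i.choose u : ℝ) * (a (u+1) * b (i-u)) + (i.choose (u+1) : ℝ) * (a (u+1) * b (i-u)) := by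
    intro u hu
    rw [Nat.succ_sub_succ, Nat.choose_succ_succ]
    push_cast
    ring
  rw [Finset.sum_congr rfl e1, Finset.sum_add_distrib]
  have e2 : ∀ u ∈ range (i+1), (i.choose u : ℝ) * (a (u+1) * b (i-u) + a u * b (i-u+1))
      = (i.choose u : ℝ) * (a (u+1) * b (i-u)) + (i.choose u : ℝ) * (a u * b (i+1-u)) := by
    intro u hu
    have hui : u ≤ i := Nat.lt_succ_iff.mp (Finset.mem_range.mp hu)
    have : i - u + 1 = i + 1 - u := (Nat.succ_sub hui).symm
    rw [mul_add, this]
  rw [Finset.sum_congr rfl e2, Finset.sum_add_distrib]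
  have := key.symm.trans key2
  -- this : ∑ (u+1)-shifted = plain sum minus...
  simp only [Nat.choose_zero_right, Nat.cast_one, one_mul, Nat.sub_zero]
  linarith [key, key2]

lemma hasDerivAt_iteratedDeriv {g : ℝ → ℝ} (hg : ContDiff ℝ (⊤:ℕ∞) g) (m : ℕ) (x : ℝ) :
    HasDerivAt (iteratedDeriv m g) (iteratedDeriv (m+1) g x) x := by
  have h : ContDiff ℝ (⊤:ℕ∞) (iteratedDeriv m g) := by
    rw [iteratedDeriv_eq_iterate]; exact ContDiff.iterate_deriv m hg
  have h2 := (h.differentiable (by simp) x).hasDerivAt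
  rwa [← iteratedDeriv_succ] at h2

lemma master (w₁ w₂ : ℕ → ℝ → ℝ)
    (hw₁ : ∀ (u : ℕ) (x : ℝ), x ≠ 0 → HasDerivAt (w₁ u) (w₁ (u+1) x) x)
    (hw₂ : ∀ (u : ℕ) (x : ℝ), x ≠ 0 → HasDerivAt (w₂ u) (w₂ (u+1) x) x)
    {g₁ g₂ g₃ : ℝ → ℝ} (hg₁ : ContDiff ℝ (⊤:ℕ∞) g₁) (hg₂ : ContDiff ℝ (⊤:ℕ∞) g₂)
    (hg₃ : ContDiff ℝ (⊤:ℕ∞) g₃) :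
    ∀ (i : ℕ) (r : ℝ), r ≠ 0 →
      iteratedDeriv i (fun ρ => w₁ 0 ρ * g₁ ρ + w₂ 0 ρ * g₂ ρ + g₃ ρ) r
        = ∑ u ∈ range (i+1), (i.choose u : ℝ) *
            (w₁ u r * iteratedDeriv (i-u) g₁ r + w₂ u r * iteratedDeriv (i-u) g₂ r)
          + iteratedDeriv i g₃ r := by
  intro i
  induction i with
  | zero => intro r hr; simp
  | succ i ih =>
    intro r hr
    rw [iteratedDeriv_succ]
    have hmem : {x : ℝ | x ≠ 0} ∈ nhds r := by
      exact isOpen_ne.mem_nhds hr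
    have hloc : iteratedDeriv i (fun ρ => w₁ 0 ρ * g₁ ρ + w₂ 0 ρ * g₂ ρ + g₃ ρ)
        =ᶠ[nhds r] fun x => ∑ u ∈ range (i+1), (i.choose u : ℝ) *
            (w₁ u x * iteratedDeriv (i-u) g₁ x + w₂ u x * iteratedDeriv (i-u) g₂ x)
          + iteratedDeriv i g₃ x := by
      filter_upwards [hmem] with x hx
      exact ih x hx
    rw [hloc.deriv_eq]
    have hder : HasDerivAt (fun x => ∑ u ∈ range (i+1), (i.choose u : ℝ) *
            (w₁ u x * iteratedDeriv (i-u) g₁ x + w₂ u x * iteratedDeriv (i-u) g₂ x)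
          + iteratedDeriv i g₃ x)
        (∑ u ∈ range (i+1), (i.choose u : ℝ) *
            ((w₁ (u+1) r * iteratedDeriv (i-u) g₁ r + w₁ u r * iteratedDeriv (i-u+1) g₁ r)
              + (w₂ (u+1) r * iteratedDeriv (i-u) g₂ r + w₂ u r * iteratedDeriv (i-u+1) g₂ r))
          + iteratedDeriv (i+1) g₃ r) r := by
      apply HasDerivAt.add
      · apply HasDerivAt.fun_sum
        intro u _
        exact (((hw₁ u r hr).mul (hasDerivAt_iteratedDeriv hg₁ (i-u) r)).add
          ((hw₂ u r hr).mul (hasDerivAt_iteratedDeriv hg₂ (i-u) r))).const_mul _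
      · exact hasDerivAt_iteratedDeriv hg₃ i r
    rw [hder.deriv]
    have split : ∀ u ∈ range (i+1), (i.choose u : ℝ) *
            ((w₁ (u+1) r * iteratedDeriv (i-u) g₁ r + w₁ u r * iteratedDeriv (i-u+1) g₁ r)
              + (w₂ (u+1) r * iteratedDeriv (i-u) g₂ r + w₂ u r * iteratedDeriv (i-u+1) g₂ r))
        = (i.choose u : ℝ) * (w₁ (u+1) r * iteratedDeriv (i-u) g₁ r + w₁ u r * iteratedDeriv (i-u+1) g₁ r)
          + (i.choose u : ℝ) * (w₂ (u+1) r * iteratedDeriv (i-u) g₂ r + w₂ u r * iteratedDeriv (i-u+1) g₂ r) := by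
      intro u _; ring
    rw [Finset.sum_congr rfl split, Finset.sum_add_distrib,
      pascal_sum i (fun u => w₁ u r) (fun m => iteratedDeriv m g₁ r),
      pascal_sum i (fun u => w₂ u r) (fun m => iteratedDeriv m g₂ r),
      ← Finset.sum_add_distrib]
    congr 1
    apply Finset.sum_congr rfl
    intro u _
    ring


noncomputable def w₁ (u : ℕ) (ρ : ℝ) : ℝ := (-1)^(u+1) * (u.factorial : ℝ) * ρ ^ (-(u+1 : ℕ) : ℤ)
noncomputable def w₂ (c : ℝ) (u : ℕ) (ρ : ℝ) : ℝ :=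
  c * ((-1)^u * ((u+1).factorial : ℝ) * ρ ^ (-(u+2 : ℕ) : ℤ))

lemma hasDerivAt_w₁ (u : ℕ) (x : ℝ) (hx : x ≠ 0) : HasDerivAt (w₁ u) (w₁ (u+1) x) x := by
  have h := (hasDerivAt_zpow (-(u+1 : ℕ) : ℤ) x (Or.inl hx)).const_mul
    ((-1:ℝ)^(u+1) * (u.factorial : ℝ))
  have hfun : (fun y : ℝ => (-1:ℝ)^(u+1) * (u.factorial : ℝ) * y ^ (-(u+1 : ℕ) : ℤ)) = w₁ u := rfl
  rw [hfun] at h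
  convert h using 1
  · rfl
  · rfl
  have he : (-(u+1 : ℕ) : ℤ) - 1 = (-(u+1+1 : ℕ) : ℤ) := by push_cast; ring
  rw [w₁, ← he]
  push_cast [Nat.factorial_succ]
  ring

lemma hasDerivAt_w₂ (c : ℝ) (u : ℕ) (x : ℝ) (hx : x ≠ 0) :
    HasDerivAt (w₂ c u) (w₂ c (u+1) x) x := by
  have h := (hasDerivAt_zpow (-(u+2 : ℕ) : ℤ) x (Or.inl hx)).const_mul
    (c * ((-1:ℝ)^u * ((u+1).factorial : ℝ)))
  have hfun : (fun y : ℝ => c * ((-1:ℝ)^u * ((u+1).factorial : ℝ)) * y ^ (-(u+2 : ℕ) : ℤ))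
      = w₂ c u := by funext y; rw [w₂]; ring
  rw [hfun] at h
  convert h using 1
  · rfl
  · rfl
  have he : (-(u+2 : ℕ) : ℤ) - 1 = (-(u+1+2 : ℕ) : ℤ) := by push_cast; ring
  rw [w₂, ← he]
  push_cast [Nat.factorial_succ]
  ring


lemma isOpen_fst_ne : IsOpen {q : ℝ × ℝ × ℝ | q.1 ≠ 0} :=
  isOpen_ne.preimage continuous_fst

lemma pd_iter_LP {c : ℝ} (v : ℝ × ℝ × ℝ) (hv : v.1 = 0) (m : ℕ) :
    ∀ {g : ℝ × ℝ × ℝ → ℝ}, ContDiff ℝ (⊤:ℕ∞) g → ∀ p : ℝ × ℝ × ℝ, p.1 ≠ 0 →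
      (pd v)^[m] (LP c g) p = LP c ((pd v)^[m] g) p := by
  induction m with
  | zero => intro g hg p hp; rfl
  | succ m ih =>
    intro g hg p hp
    rw [Function.iterate_succ_apply]
    have h1 : ∀ q ∈ {q : ℝ × ℝ × ℝ | q.1 ≠ 0}, pd v (LP c g) q = LP c (pd v g) q :=
      fun q hq => pd_LP v hv hg hq
    rw [pd_iter_congr_on isOpen_fst_ne v m h1 p hp, ih (contDiff_pd v hg) p hp,
      Function.iterate_succ_apply]

end TaylorRec

section Main
open TaylorRec

/-- Scaled mixed Taylor coefficient `Ḡ_{ijk} = (1/(i!j!k!)) ∂_r^i ∂_{r₁}^j ∂_x^k G`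
evaluated at the point `(r, r₁, x)`. -/
noncomputable def taylorCoeff (G : ℝ → ℝ → ℝ → ℝ) (r r₁ x : ℝ) (i j k : ℕ) : ℝ :=
  (1 / ((i.factorial : ℝ) * (j.factorial : ℝ) * (k.factorial : ℝ))) *
    iteratedDeriv i
      (fun ρ => iteratedDeriv j
        (fun ρ₁ => iteratedDeriv k (fun y => G ρ ρ₁ y) x) r₁) r

open Finset in
/-- Laplace-equation recursion for the scaled Taylor coefficients of a smooth solution
of the modal cylindrical Laplace equation. -/
theorem taylorCoeff_laplace_recursion (n : ℤ) (G : ℝ → ℝ → ℝ → ℝ)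
    (hG : ContDiff ℝ (⊤ : ℕ∞) (fun p : ℝ × ℝ × ℝ => G p.1 p.2.1 p.2.2))
    (r r₁ x : ℝ) (U : Set (ℝ × ℝ × ℝ)) (hU : IsOpen U) (hmem : (r, r₁, x) ∈ U)
    (hpos : ∀ p ∈ U, 0 < p.1)
    (hPDE : ∀ p ∈ U,
      deriv (fun ρ : ℝ => deriv (fun ρ' : ℝ => G ρ' p.2.1 p.2.2) ρ) p.1
        + (1 / p.1) * deriv (fun ρ : ℝ => G ρ p.2.1 p.2.2) p.1
        - ((n : ℝ) ^ 2 / p.1 ^ 2) * G p.1 p.2.1 p.2.2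
        + deriv (fun y : ℝ => deriv (fun y' : ℝ => G p.1 p.2.1 y') y) p.2.2 = 0) :
    ∀ i j k : ℕ,
      taylorCoeff G r r₁ x (i + 2) j k =
        (∑ u ∈ range (i + 1),
          ((-1 : ℝ) ^ u / r ^ (u + 1)) * (1 / (((i : ℝ) + 1) * ((i : ℝ) + 2))) *
            ((((u : ℝ) + 1) * (n : ℝ) ^ 2 / r) * taylorCoeff G r r₁ x (i - u) j k
              - ((i : ℝ) - (u : ℝ) + 1) * taylorCoeff G r r₁ x (i - u + 1) j k))
          - (((k : ℝ) + 1) * ((k : ℝ) + 2) / (((i : ℝ) + 1) * ((i : ℝ) + 2))) *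
              taylorCoeff G r r₁ x i j (k + 2) := by
  have hf : ContDiff ℝ (⊤:ℕ∞) (fun p : ℝ × ℝ × ℝ => G p.1 p.2.1 p.2.2) := hG.of_le (by simp)
  set f : ℝ × ℝ × ℝ → ℝ := fun p => G p.1 p.2.1 p.2.2 with hfdef
  have hr : r ≠ 0 := ne_of_gt (hpos _ hmem)
  -- Step 1 : taylorCoeff in pd form
  have tc : ∀ (i' j' k' : ℕ), taylorCoeff G r r₁ x i' j' k'
      = (1 / ((i'.factorial : ℝ) * (j'.factorial : ℝ) * (k'.factorial : ℝ))) *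
        ((pd (1,0,0))^[i'] ((pd (0,1,0))^[j'] ((pd (0,0,1))^[k'] f)) (r,r₁,x)) := by
    intro i' j' k'
    rw [taylorCoeff]
    congr 1
    have h2 : ∀ ρ : ℝ, (fun s => iteratedDeriv k' (fun y => G ρ s y) x)
        = fun s => ((pd (0,0,1))^[k'] f) (ρ,s,x) := by
      intro ρ; funext s
      exact iteratedDeriv_line3 hf k' ρ s x
    have h3 : (fun ρ => iteratedDeriv j' (fun s => iteratedDeriv k' (fun y => G ρ s y) x) r₁)
        = fun ρ => ((pd (0,1,0))^[j'] ((pd (0,0,1))^[k'] f)) (ρ,r₁,x) := by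
      funext ρ
      rw [h2 ρ]
      exact iteratedDeriv_line2 (contDiff_pd_iter _ hf k') j' ρ r₁ x
    rw [h3]
    exact iteratedDeriv_line1 (contDiff_pd_iter _ (contDiff_pd_iter _ hf k') j') i' r r₁ x
  -- Step 2 : PDE in LP form
  have hLP0 : ∀ p ∈ U, LP ((n:ℝ)^2) f p = 0 := by
    intro p hp
    have h := hPDE p hp
    have ha : p.1 ≠ 0 := ne_of_gt (hpos p hp)
    obtain ⟨a, b, y⟩ := p
    dsimp only at h ha
    have hd1 : ∀ t : ℝ, deriv (fun ρ' : ℝ => G ρ' b y) t = pd (1,0,0) f (t,b,y) :=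
      fun t => (hasDerivAt_line1 (diff_of hf) t b y).deriv
    have hd11 : deriv (fun ρ : ℝ => deriv (fun ρ' : ℝ => G ρ' b y) ρ) a
        = pd (1,0,0) (pd (1,0,0) f) (a,b,y) := by
      rw [show (fun ρ : ℝ => deriv (fun ρ' : ℝ => G ρ' b y) ρ)
        = fun ρ => pd (1,0,0) f (ρ,b,y) from funext hd1]
      exact (hasDerivAt_line1 (diff_of (contDiff_pd _ hf)) a b y).deriv
    have hd3 : ∀ t : ℝ, deriv (fun y' : ℝ => G a b y') t = pd (0,0,1) f (a,b,t) :=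
      fun t => (hasDerivAt_line3 (diff_of hf) a b t).deriv
    have hd33 : deriv (fun t : ℝ => deriv (fun y' : ℝ => G a b y') t) y
        = pd (0,0,1) (pd (0,0,1) f) (a,b,y) := by
      rw [show (fun t : ℝ => deriv (fun y' : ℝ => G a b y') t)
        = fun t => pd (0,0,1) f (a,b,t) from funext hd3]
      exact (hasDerivAt_line3 (diff_of (contDiff_pd _ hf)) a b y).deriv
    rw [hd11, hd1 a, hd33] at h
    rw [show G a b y = f (a,b,y) from rfl] at h
    rw [LP]
    dsimp only
    rw [show (1:ℝ)/a = a⁻¹ from one_div a] at h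
    rw [show ((n:ℝ)^2 / a^2) = (n:ℝ)^2 * (a^2)⁻¹ from div_eq_mul_inv _ _] at h
    linarith [h]
  intro i j k
  -- Step 3 : LP for the (j,k)-differentiated function, on U
  have hHs : ContDiff ℝ (⊤:ℕ∞) ((pd (0,1,0))^[j] ((pd (0,0,1))^[k] f)) :=
    contDiff_pd_iter _ (contDiff_pd_iter _ hf k) j
  have key : ∀ p ∈ U, LP ((n:ℝ)^2) ((pd (0,1,0))^[j] ((pd (0,0,1))^[k] f)) p = 0 := by
    intro p hp
    have hp1 : p.1 ≠ 0 := ne_of_gt (hpos p hp)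
    have e1 := (pd_iter_LP (c := (n:ℝ)^2) (0,1,0) rfl j (contDiff_pd_iter (0,0,1) hf k) p hp1).symm
    have e2 : ∀ q ∈ {q : ℝ×ℝ×ℝ | q.1 ≠ 0}, (pd (0,0,1))^[k] (LP ((n:ℝ)^2) f) q
        = LP ((n:ℝ)^2) ((pd (0,0,1))^[k] f) q :=
      fun q hq => pd_iter_LP _ rfl k hf q hq
    have e3 := pd_iter_congr_on isOpen_fst_ne (0,1,0) j e2 p hp1
    have e4 : ∀ q ∈ U, (pd (0,0,1))^[k] (LP ((n:ℝ)^2) f) q = 0 :=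
      pd_iter_zero_on hU _ k hLP0
    have e5 := pd_iter_zero_on hU (0,1,0) j e4 p hp
    rw [e1, ← e3]
    exact e5
  -- Step 4 : one-variable reduction along the first coordinate
  have hH1s : ContDiff ℝ (⊤:ℕ∞) (pd (1,0,0) ((pd (0,1,0))^[j] ((pd (0,0,1))^[k] f))) :=
    contDiff_pd _ hHs
  have hVopen : IsOpen {ρ : ℝ | ((ρ, r₁, x) : ℝ × ℝ × ℝ) ∈ U} := hU.preimage (by fun_prop)
  have hmain : iteratedDeriv (i+2) (fun ρ => ((pd (0,1,0))^[j] ((pd (0,0,1))^[k] f)) (ρ,r₁,x)) r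
      = ∑ u ∈ range (i+1), (i.choose u : ℝ) *
          (w₁ u r * iteratedDeriv (i-u)
              (fun ρ => pd (1,0,0) ((pd (0,1,0))^[j] ((pd (0,0,1))^[k] f)) (ρ,r₁,x)) r
            + w₂ ((n:ℝ)^2) u r * iteratedDeriv (i-u)
              (fun ρ => ((pd (0,1,0))^[j] ((pd (0,0,1))^[k] f)) (ρ,r₁,x)) r)
        + iteratedDeriv i
            (fun ρ => -(pd (0,0,1) (pd (0,0,1) ((pd (0,1,0))^[j] ((pd (0,0,1))^[k] f))) (ρ,r₁,x))) r := by
    rw [iteratedDeriv_succ',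
      show deriv (fun ρ => ((pd (0,1,0))^[j] ((pd (0,0,1))^[k] f)) (ρ,r₁,x))
        = fun ρ => pd (1,0,0) ((pd (0,1,0))^[j] ((pd (0,0,1))^[k] f)) (ρ,r₁,x) from
          funext fun t => (hasDerivAt_line1 (diff_of hHs) t r₁ x).deriv,
      iteratedDeriv_succ',
      show deriv (fun ρ => pd (1,0,0) ((pd (0,1,0))^[j] ((pd (0,0,1))^[k] f)) (ρ,r₁,x))
        = fun ρ => pd (1,0,0) (pd (1,0,0) ((pd (0,1,0))^[j] ((pd (0,0,1))^[k] f))) (ρ,r₁,x) from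
          funext fun t => (hasDerivAt_line1 (diff_of hH1s) t r₁ x).deriv]
    have hev : (fun ρ => pd (1,0,0) (pd (1,0,0) ((pd (0,1,0))^[j] ((pd (0,0,1))^[k] f))) (ρ,r₁,x))
        =ᶠ[nhds r] fun ρ =>
          w₁ 0 ρ * pd (1,0,0) ((pd (0,1,0))^[j] ((pd (0,0,1))^[k] f)) (ρ,r₁,x)
          + w₂ ((n:ℝ)^2) 0 ρ * ((pd (0,1,0))^[j] ((pd (0,0,1))^[k] f)) (ρ,r₁,x)
          + -(pd (0,0,1) (pd (0,0,1) ((pd (0,1,0))^[j] ((pd (0,0,1))^[k] f))) (ρ,r₁,x)) := by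
      filter_upwards [hVopen.mem_nhds hmem] with ρ hρ
      have h := key (ρ, r₁, x) hρ
      rw [LP] at h
      dsimp only at h ⊢
      have hρ0 : ρ ≠ 0 := ne_of_gt (hpos _ hρ)
      have e0 : w₁ 0 ρ = -ρ⁻¹ := by
        rw [w₁]
        norm_num
      have e0' : w₂ ((n:ℝ)^2) 0 ρ = (n:ℝ)^2 * (ρ^2)⁻¹ := by
        have hz : ρ ^ (-(0+2:ℕ):ℤ) = (ρ^2)⁻¹ := by
          rw [zpow_neg]
          norm_cast
        rw [w₂, hz]
        norm_num
      rw [e0, e0']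
      linarith [h]
    rw [Filter.EventuallyEq.iteratedDeriv_eq i hev]
    exact master w₁ (w₂ ((n:ℝ)^2)) hasDerivAt_w₁ (hasDerivAt_w₂ ((n:ℝ)^2))
      ((contDiff_pd _ hHs).comp (contDiff_id.prodMk contDiff_const))
      (hHs.comp (contDiff_id.prodMk contDiff_const))
      (((contDiff_pd _ (contDiff_pd _ hHs)).comp (contDiff_id.prodMk contDiff_const)).neg) i r hr
  -- translation of the iterated line derivatives
  have hNphi : ∀ m : ℕ, iteratedDeriv m (fun ρ => ((pd (0,1,0))^[j] ((pd (0,0,1))^[k] f)) (ρ,r₁,x)) r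
      = (pd (1,0,0))^[m] ((pd (0,1,0))^[j] ((pd (0,0,1))^[k] f)) (r,r₁,x) :=
    fun m => iteratedDeriv_line1 hHs m r r₁ x
  have hNphi1 : ∀ m : ℕ, iteratedDeriv m
        (fun ρ => pd (1,0,0) ((pd (0,1,0))^[j] ((pd (0,0,1))^[k] f)) (ρ,r₁,x)) r
      = (pd (1,0,0))^[m+1] ((pd (0,1,0))^[j] ((pd (0,0,1))^[k] f)) (r,r₁,x) := by
    intro m
    rw [iteratedDeriv_line1 hH1s m r r₁ x, ← Function.iterate_succ_apply]
  have hBeq : iteratedDeriv i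
        (fun ρ => pd (0,0,1) (pd (0,0,1) ((pd (0,1,0))^[j] ((pd (0,0,1))^[k] f))) (ρ,r₁,x)) r
      = (pd (1,0,0))^[i] ((pd (0,1,0))^[j] ((pd (0,0,1))^[k+2] f)) (r,r₁,x) := by
    have hc1 : pd (0,0,1) ((pd (0,1,0))^[j] ((pd (0,0,1))^[k] f))
        = (pd (0,1,0))^[j] ((pd (0,0,1))^[k+1] f) := by
      rw [pd_iter_comm (contDiff_pd_iter (0,0,1) hf k) (0,0,1) (0,1,0) j]
      congr 1
      exact (Function.iterate_succ_apply' _ k f).symm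
    have hc2 : pd (0,0,1) ((pd (0,1,0))^[j] ((pd (0,0,1))^[k+1] f))
        = (pd (0,1,0))^[j] ((pd (0,0,1))^[k+2] f) := by
      rw [pd_iter_comm (contDiff_pd_iter (0,0,1) hf (k+1)) (0,0,1) (0,1,0) j]
      congr 1
      exact (Function.iterate_succ_apply' _ (k+1) f).symm
    rw [hc1, hc2]
    exact iteratedDeriv_line1 (contDiff_pd_iter _ (contDiff_pd_iter _ hf (k+2)) j) i r r₁ x
  have hmainN : (pd (1,0,0))^[i+2] ((pd (0,1,0))^[j] ((pd (0,0,1))^[k] f)) (r,r₁,x)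
      = ∑ u ∈ range (i+1), (i.choose u : ℝ) *
          (w₁ u r * (pd (1,0,0))^[i-u+1] ((pd (0,1,0))^[j] ((pd (0,0,1))^[k] f)) (r,r₁,x)
            + w₂ ((n:ℝ)^2) u r * (pd (1,0,0))^[i-u] ((pd (0,1,0))^[j] ((pd (0,0,1))^[k] f)) (r,r₁,x))
        - (pd (1,0,0))^[i] ((pd (0,1,0))^[j] ((pd (0,0,1))^[k+2] f)) (r,r₁,x) := by
    rw [← hNphi (i+2), hmain, iteratedDeriv_fun_neg, hBeq, ← sub_eq_add_neg]
    congr 1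
    exact Finset.sum_congr rfl fun u hu => by rw [hNphi1 (i-u), hNphi (i-u)]
  -- final algebra
  simp only [tc]
  rw [hmainN, mul_sub, Finset.mul_sum]
  have F1 : (((i+2).factorial : ℕ):ℝ) = ((i:ℝ)+2)*((i:ℝ)+1)*(i.factorial:ℝ) := by
    rw [Nat.factorial_succ, Nat.factorial_succ]
    push_cast
    ring
  have F4 : (((k+2).factorial : ℕ):ℝ) = ((k:ℝ)+2)*((k:ℝ)+1)*(k.factorial:ℝ) := by
    rw [Nat.factorial_succ, Nat.factorial_succ]
    push_cast
    ring
  have hifac : ((i.factorial:ℕ):ℝ) ≠ 0 := Nat.cast_ne_zero.mpr (Nat.factorial_ne_zero i)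
  have hjfac : ((j.factorial:ℕ):ℝ) ≠ 0 := Nat.cast_ne_zero.mpr (Nat.factorial_ne_zero j)
  have hkfac : ((k.factorial:ℕ):ℝ) ≠ 0 := Nat.cast_ne_zero.mpr (Nat.factorial_ne_zero k)
  have hi1 : ((i:ℝ)+1) ≠ 0 := by positivity
  have hi2 : ((i:ℝ)+2) ≠ 0 := by positivity
  congr 1
  · apply Finset.sum_congr rfl
    intro u hu
    have hui : u ≤ i := Nat.lt_succ_iff.mp (Finset.mem_range.mp hu)
    have huir : (u:ℝ) ≤ (i:ℝ) := Nat.cast_le.mpr hui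
    have F2 : (((i-u+1).factorial : ℕ):ℝ) = ((i:ℝ)-(u:ℝ)+1)*(((i-u).factorial:ℕ):ℝ) := by
      rw [Nat.factorial_succ]
      push_cast [Nat.cast_sub hui]
      ring
    have hchoose : ((i.choose u : ℕ):ℝ) * ((u.factorial:ℕ):ℝ) * (((i-u).factorial:ℕ):ℝ)
        = ((i.factorial:ℕ):ℝ) := by
      exact_mod_cast congrArg (Nat.cast : ℕ → ℝ) (Nat.choose_mul_factorial_mul_factorial hui)
    have F3 : ((i.choose u : ℕ):ℝ)
        = ((i.factorial:ℕ):ℝ) / (((u.factorial:ℕ):ℝ) * (((i-u).factorial:ℕ):ℝ)) := by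
      rw [eq_div_iff (by positivity)]
      linear_combination hchoose
    have hiufac : (((i-u).factorial:ℕ):ℝ) ≠ 0 := Nat.cast_ne_zero.mpr (Nat.factorial_ne_zero _)
    have hufac : ((u.factorial:ℕ):ℝ) ≠ 0 := Nat.cast_ne_zero.mpr (Nat.factorial_ne_zero _)
    have hiu1 : ((i:ℝ)-(u:ℝ)+1) ≠ 0 := by
      have : (0:ℝ) < (i:ℝ)-(u:ℝ)+1 := by linarith
      exact ne_of_gt this
    have z1 : r ^ (-(u+1:ℕ):ℤ) = (r^(u+1))⁻¹ := by rw [zpow_neg, zpow_natCast]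
    have z2 : r ^ (-(u+2:ℕ):ℤ) = (r^(u+2))⁻¹ := by rw [zpow_neg, zpow_natCast]
    have F5 : (((u+1).factorial : ℕ):ℝ) = ((u:ℝ)+1) * ((u.factorial:ℕ):ℝ) := by
      rw [Nat.factorial_succ]
      push_cast
      ring
    rw [w₁, w₂, z1, z2, F5, F3, F1, F2]
    have hrp1 : r^(u+1) ≠ 0 := pow_ne_zero _ hr
    have hrp2 : r^(u+2) ≠ 0 := pow_ne_zero _ hr
    field_simp
    ring
  · rw [F1, F4]
    field_simp



end Main
end

section
/- The axial-derivative recursion base case holds: for n ≥ 1 and (r, r₁, x) with r, r₁ > 0, ρ±² = (r±r₁)² + x² > 0, the modal Green's function satisfies ∂G⁽ⁿ⁾/∂x = (n − 1/2) [ (G⁽ⁿ⁾ + G⁽ⁿ⁻¹⁾) x/ρ₊² + (G⁽ⁿ⁾ − G⁽ⁿ⁻¹⁾) x/ρ₋² ]. -/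
/-- `legendreQhalf n χ = Q_{n-1/2}(χ)`, the Legendre function of the second kind of
degree `n - 1/2`, via its integral representation for `χ > 1`. -/
noncomputable def legendreQhalf (n : ℕ) (χ : ℝ) : ℝ :=
  ∫ t in Set.Ioi (0:ℝ), (χ + Real.sqrt (χ ^ 2 - 1) * Real.cosh t) ^ (-((n : ℝ) + 1 / 2))

/-- The modal Green's function expressed via the Legendre function of the second kind. -/
noncomputable def modalGreenQ (n : ℕ) (r r₁ x : ℝ) : ℝ :=
  legendreQhalf n ((r ^ 2 + r₁ ^ 2 + x ^ 2) / (2 * r * r₁)) / (2 * Real.pi * Real.sqrt (r * r₁))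

namespace ModalAux

open Real MeasureTheory Set Filter

/-- The generic integral `∫₀^∞ (χ + √(χ²-1) cosh t)^(-p) dt`. -/
noncomputable def J (p χ : ℝ) : ℝ :=
  ∫ t in Set.Ioi (0:ℝ), (χ + Real.sqrt (χ ^ 2 - 1) * Real.cosh t) ^ (-p)

lemma legendreQhalf_eq (n : ℕ) (χ : ℝ) : legendreQhalf n χ = J ((n:ℝ) + 1/2) χ := rfl

variable {χ p q : ℝ}

lemma sq_sub_pos (hχ : 1 < χ) : 0 < χ ^ 2 - 1 := by nlinarith

lemma s_pos (hχ : 1 < χ) : 0 < Real.sqrt (χ ^ 2 - 1) := Real.sqrt_pos.2 (sq_sub_pos hχ)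

lemma s_sq (hχ : 1 < χ) : Real.sqrt (χ ^ 2 - 1) ^ 2 = χ ^ 2 - 1 :=
  Real.sq_sqrt (sq_sub_pos hχ).le

lemma u_pos (hχ : 1 < χ) (t : ℝ) : 0 < χ + Real.sqrt (χ ^ 2 - 1) * Real.cosh t := by
  have h1 := s_pos hχ
  have h2 := Real.cosh_pos (x := t)
  nlinarith

lemma u_lower (hχ : 1 < χ) (t : ℝ) :
    Real.sqrt (χ ^ 2 - 1) / 2 * Real.exp t ≤ χ + Real.sqrt (χ ^ 2 - 1) * Real.cosh t := by
  have hs := s_pos hχ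
  have h1 : Real.exp t / 2 ≤ Real.cosh t := by
    rw [Real.cosh_eq]; have := Real.exp_pos (-t); linarith
  nlinarith [Real.exp_pos t]

lemma u_rpow_le (hχ : 1 < χ) (hq : 0 ≤ q) (t : ℝ) :
    (χ + Real.sqrt (χ ^ 2 - 1) * Real.cosh t) ^ (-q) ≤
      (Real.sqrt (χ ^ 2 - 1) / 2) ^ (-q) * Real.exp (-q * t) := by
  have hs := s_pos hχ
  have h0 : 0 < Real.sqrt (χ ^ 2 - 1) / 2 * Real.exp t := by positivity
  have h1 := Real.rpow_le_rpow_of_nonpos h0 (u_lower hχ t) (neg_nonpos.2 hq)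
  rw [Real.mul_rpow (by positivity) (Real.exp_pos t).le, ← Real.exp_mul,
    mul_comm t (-q)] at h1
  exact h1

lemma continuous_u : Continuous fun t : ℝ => χ + Real.sqrt (χ ^ 2 - 1) * Real.cosh t :=
  continuous_const.add (continuous_const.mul Real.continuous_cosh)

lemma integrable_J (hχ : 1 < χ) (hp : 0 < p) :
    IntegrableOn (fun t => (χ + Real.sqrt (χ ^ 2 - 1) * Real.cosh t) ^ (-p)) (Set.Ioi 0) := by
  refine Integrable.mono'
    ((exp_neg_integrableOn_Ioi 0 hp).const_mul ((Real.sqrt (χ ^ 2 - 1) / 2) ^ (-p))) ?_ ?_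
  · exact (continuous_u.rpow_const (fun t => Or.inl (u_pos hχ t).ne')).aestronglyMeasurable
  · filter_upwards with t
    rw [Real.norm_eq_abs, abs_of_pos (Real.rpow_pos_of_pos (u_pos hχ t) _)]
    exact u_rpow_le hχ hp.le t

lemma cosh_le_exp' {t : ℝ} (ht : 0 ≤ t) : Real.cosh t ≤ Real.exp t := by
  rw [Real.cosh_eq]
  have h := Real.exp_le_exp.2 (neg_le_self ht)
  linarith

lemma abs_sinh_le_exp {t : ℝ} (ht : 0 ≤ t) : |Real.sinh t| ≤ Real.exp t := by
  rw [abs_le, Real.sinh_eq]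
  constructor <;> nlinarith [Real.exp_pos t, Real.exp_pos (-t),
    Real.exp_le_exp.2 (neg_le_self ht)]

lemma hasDerivAt_J (hχ : 1 < χ) (hp : 0 < p) :
    HasDerivAt (fun x => J p x)
      (-(p / (χ ^ 2 - 1)) * (χ * J p χ - J (p + 1) χ)) χ := by
  have hs := s_pos hχ
  set F : ℝ → ℝ → ℝ := fun x t => (x + Real.sqrt (x ^ 2 - 1) * Real.cosh t) ^ (-p) with hF
  set F' : ℝ → ℝ → ℝ := fun x t =>
    -p * (x + Real.sqrt (x ^ 2 - 1) * Real.cosh t) ^ (-p - 1) *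
      (1 + x / Real.sqrt (x ^ 2 - 1) * Real.cosh t) with hF'
  set c : ℝ := (χ + 1) / 2 with hc
  have hc1 : 1 < c := by rw [hc]; linarith
  set s₀ : ℝ := Real.sqrt (c ^ 2 - 1) with hs₀
  have hs₀pos : 0 < s₀ := s_pos hc1
  set M : ℝ := χ + (χ - 1) / 2 with hM
  have hMpos : 0 < M := by rw [hM]; linarith
  set K : ℝ := p * ((s₀ / 2) ^ (-(p + 1)) * (1 + M / s₀)) with hK
  have hball : ∀ x ∈ Metric.ball χ ((χ - 1) / 2), c < x ∧ x ≤ M := by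
    intro x hx
    rw [Metric.mem_ball, Real.dist_eq, abs_lt] at hx
    constructor
    · rw [hc]; linarith [hx.1]
    · rw [hM]; linarith [hx.2]
  have key := hasDerivAt_integral_of_dominated_loc_of_deriv_le
    (F := F) (F' := F') (x₀ := χ) (bound := fun t => K * Real.exp (-p * t))
    (μ := volume.restrict (Set.Ioi (0:ℝ))) (Metric.ball_mem_nhds χ (show (0:ℝ) < (χ - 1) / 2 by linarith))
    ?_ ?_ ?_ ?_ ?_ ?_
  · -- conclude
    obtain ⟨-, hd⟩ := key
    have heq : (∫ t in Set.Ioi (0:ℝ), F' χ t) =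
        -(p / (χ ^ 2 - 1)) * (χ * J p χ - J (p + 1) χ) := by
      have hpt : ∀ t : ℝ, F' χ t = -(p / (χ ^ 2 - 1)) *
          (χ * (χ + Real.sqrt (χ ^ 2 - 1) * Real.cosh t) ^ (-p) -
            (χ + Real.sqrt (χ ^ 2 - 1) * Real.cosh t) ^ (-(p + 1))) := by
        intro t
        have hu := u_pos hχ t
        have hs2 := s_sq hχ
        have hsne : Real.sqrt (χ ^ 2 - 1) ≠ 0 := hs.ne'
        have hχ2 : χ ^ 2 - 1 ≠ 0 := (sq_sub_pos hχ).ne'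
        have e1 : (χ + Real.sqrt (χ ^ 2 - 1) * Real.cosh t) ^ (-p) =
            (χ + Real.sqrt (χ ^ 2 - 1) * Real.cosh t) ^ (-p - 1) *
              (χ + Real.sqrt (χ ^ 2 - 1) * Real.cosh t) := by
          rw [← Real.rpow_add_one hu.ne']; ring_nf
        have e2 : (χ + Real.sqrt (χ ^ 2 - 1) * Real.cosh t) ^ (-(p + 1)) =
            (χ + Real.sqrt (χ ^ 2 - 1) * Real.cosh t) ^ (-p - 1) := by
          congr 1; ring
        simp only [hF']
        rw [e1, e2]
        field_simp
        linear_combination (χ * Real.cosh t) * hs2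
      rw [MeasureTheory.integral_congr_ae (Filter.Eventually.of_forall hpt)]
      rw [MeasureTheory.integral_const_mul]
      rw [MeasureTheory.integral_sub ((integrable_J hχ hp).const_mul χ)
        (integrable_J hχ (by linarith))]
      rw [MeasureTheory.integral_const_mul]
      rfl
    rw [heq] at hd
    exact hd
  · filter_upwards [eventually_gt_nhds hχ] with x hx1
    exact ((continuous_const.add (continuous_const.mul Real.continuous_cosh)).rpow_const
      (fun t => Or.inl (u_pos hx1 t).ne')).aestronglyMeasurable
  · exact integrable_J hχ hp
  · exact ((continuous_const.mul ((continuous_const.add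
      (continuous_const.mul Real.continuous_cosh)).rpow_const
      (fun t => Or.inl (u_pos hχ t).ne'))).mul
      (continuous_const.add (continuous_const.mul Real.continuous_cosh))).aestronglyMeasurable
  · -- bound
    rw [MeasureTheory.ae_restrict_iff' measurableSet_Ioi]
    refine Filter.Eventually.of_forall fun t ht x hx => ?_
    obtain ⟨hxc, hxM⟩ := hball x hx
    have hx1 : 1 < x := lt_trans hc1 hxc
    have hsx : 0 < Real.sqrt (x ^ 2 - 1) := s_pos hx1
    have hux := u_pos hx1 t
    have ht0 : (0:ℝ) < t := ht
    have hcosh1 : (1:ℝ) ≤ Real.cosh t := Real.one_le_cosh t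
    have hcoshe : Real.cosh t ≤ Real.exp t := cosh_le_exp' ht0.le
    have hs₀x : s₀ ≤ Real.sqrt (x ^ 2 - 1) := by
      rw [hs₀]; apply Real.sqrt_le_sqrt; nlinarith
    have hb1 : (x + Real.sqrt (x ^ 2 - 1) * Real.cosh t) ^ (-(p + 1)) ≤
        (s₀ / 2) ^ (-(p + 1)) * Real.exp (-(p + 1) * t) := by
      calc (x + Real.sqrt (x ^ 2 - 1) * Real.cosh t) ^ (-(p + 1)) ≤
          (Real.sqrt (x ^ 2 - 1) / 2) ^ (-(p + 1)) * Real.exp (-(p + 1) * t) :=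
            u_rpow_le hx1 (by linarith) t
        _ ≤ (s₀ / 2) ^ (-(p + 1)) * Real.exp (-(p + 1) * t) := by
            have := Real.rpow_le_rpow_of_nonpos (by positivity : (0:ℝ) < s₀ / 2)
              (by linarith : s₀ / 2 ≤ Real.sqrt (x ^ 2 - 1) / 2)
              (by linarith : -(p + 1) ≤ 0)
            exact mul_le_mul_of_nonneg_right this (Real.exp_pos _).le
    have hb2 : 1 + x / Real.sqrt (x ^ 2 - 1) * Real.cosh t ≤ (1 + M / s₀) * Real.exp t := by
      have h1 : x / Real.sqrt (x ^ 2 - 1) ≤ M / s₀ :=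
        div_le_div₀ hMpos.le hxM hs₀pos hs₀x
      have h2 : x / Real.sqrt (x ^ 2 - 1) * Real.cosh t ≤ M / s₀ * Real.exp t :=
        mul_le_mul h1 hcoshe (by positivity) (by positivity)
      have h3 : (1:ℝ) ≤ Real.exp t := by
        rw [show (1:ℝ) = Real.exp 0 by simp]; exact Real.exp_le_exp.2 ht0.le
      nlinarith [div_nonneg hMpos.le hs₀pos.le]
    have hb2' : 0 < 1 + x / Real.sqrt (x ^ 2 - 1) * Real.cosh t := by positivity
    simp only [hF']
    rw [Real.norm_eq_abs, abs_mul, abs_mul, abs_neg, abs_of_pos hp, abs_of_pos hb2',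
      abs_of_pos (Real.rpow_pos_of_pos hux _)]
    have e3 : (x + Real.sqrt (x ^ 2 - 1) * Real.cosh t) ^ (-p - 1) =
        (x + Real.sqrt (x ^ 2 - 1) * Real.cosh t) ^ (-(p + 1)) := by congr 1; ring
    rw [e3]
    calc p * (x + Real.sqrt (x ^ 2 - 1) * Real.cosh t) ^ (-(p + 1)) *
          (1 + x / Real.sqrt (x ^ 2 - 1) * Real.cosh t)
        ≤ p * ((s₀ / 2) ^ (-(p + 1)) * Real.exp (-(p + 1) * t)) *
            ((1 + M / s₀) * Real.exp t) := by
          apply mul_le_mul _ hb2 hb2'.le (by positivity)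
          exact mul_le_mul_of_nonneg_left hb1 hp.le
      _ = K * Real.exp (-p * t) := by
          rw [hK, show (-(p + 1) * t) = -p * t + -t by ring, Real.exp_add, Real.exp_neg]
          field_simp
          try ring
  · exact (exp_neg_integrableOn_Ioi 0 hp).const_mul K
  · -- differentiability
    refine Filter.Eventually.of_forall fun t x hx => ?_
    obtain ⟨hxc, -⟩ := hball x hx
    have hx1 : 1 < x := lt_trans hc1 hxc
    have hsx : 0 < Real.sqrt (x ^ 2 - 1) := s_pos hx1
    have h1 : HasDerivAt (fun y : ℝ => y ^ 2 - 1) (2 * x) x := by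
      simpa using (hasDerivAt_pow 2 x).sub_const 1
    have h2 : HasDerivAt (fun y : ℝ => Real.sqrt (y ^ 2 - 1))
        (x / Real.sqrt (x ^ 2 - 1)) x := by
      have h := (Real.hasDerivAt_sqrt (sq_sub_pos hx1).ne').comp x h1
      refine h.congr_deriv ?_
      field_simp
    have h3 : HasDerivAt (fun y : ℝ => y + Real.sqrt (y ^ 2 - 1) * Real.cosh t)
        (1 + x / Real.sqrt (x ^ 2 - 1) * Real.cosh t) x :=
      (hasDerivAt_id x).add (h2.mul_const _)
    have h4 := (Real.hasDerivAt_rpow_const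
      (p := -p) (Or.inl (u_pos hx1 t).ne')).comp x h3
    simp only [hF, hF']
    exact h4

lemma J_rec (hχ : 1 < χ) (hp : 0 < p) :
    (p + 1) * J (p + 2) χ = (2 * p + 1) * χ * J (p + 1) χ - p * J p χ := by
  have hs' := s_pos hχ
  have hs2' := s_sq hχ
  set s : ℝ := Real.sqrt (χ ^ 2 - 1) with hsdef
  have hs : 0 < s := hs'
  have hs2 : s ^ 2 = χ ^ 2 - 1 := hs2'
  set u : ℝ → ℝ := fun t => χ + s * Real.cosh t with hu
  have hupos : ∀ t, 0 < u t := fun t => u_pos hχ t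
  set f : ℝ → ℝ := fun t => Real.sinh t * u t ^ (-(p + 1)) with hf
  set g : ℝ → ℝ := fun t => (1 / s) *
    (-p * u t ^ (-p) + (2 * p + 1) * χ * u t ^ (-(p + 1)) - (p + 1) * u t ^ (-(p + 2)))
    with hg
  have hderiv : ∀ t : ℝ, HasDerivAt f (g t) t := by
    intro t
    have h1 : HasDerivAt u (s * Real.sinh t) t :=
      ((Real.hasDerivAt_cosh t).const_mul s).const_add χ
    have h2 : HasDerivAt (fun t => u t ^ (-(p + 1)))
        (-(p + 1) * u t ^ (-(p + 1) - 1) * (s * Real.sinh t)) t :=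
      (Real.hasDerivAt_rpow_const (p := -(p + 1)) (Or.inl (hupos t).ne')).comp t h1
    have h3 := (Real.hasDerivAt_sinh t).mul h2
    have e1 : u t ^ (-(p + 1) - 1) = u t ^ (-(p + 2)) := by congr 1; ring
    have e2 : u t ^ (-(p + 1)) = u t ^ (-(p + 2)) * u t := by
      rw [← Real.rpow_add_one (hupos t).ne']; congr 1; ring
    have e3 : u t ^ (-p) = u t ^ (-(p + 2)) * u t ^ 2 := by
      rw [sq, ← mul_assoc, ← Real.rpow_add_one (hupos t).ne',
        ← Real.rpow_add_one (hupos t).ne']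
      congr 1; ring
    rw [e1] at h3
    refine h3.congr_deriv (Eq.symm ?_)
    have hsh : Real.sinh t ^ 2 = Real.cosh t ^ 2 - 1 := by
      have := Real.cosh_sq_sub_sinh_sq t; linarith
    have huval : u t = χ + s * Real.cosh t := rfl
    simp only [hg]
    rw [e2, e3, huval]
    rw [one_div, inv_mul_eq_div, div_eq_iff hs.ne']
    linear_combination (-(p + 1) * ((χ + s * Real.cosh t) ^ (-(p + 2)))) * hs2 +
      ((p + 1) * ((χ + s * Real.cosh t) ^ (-(p + 2))) * s ^ 2) * hsh
  have hgInt : IntegrableOn g (Set.Ioi (0:ℝ)) := by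
    apply Integrable.const_mul
    apply Integrable.sub
    apply Integrable.add
    · exact (integrable_J hχ hp).const_mul _
    · exact (integrable_J hχ (by linarith : (0:ℝ) < p + 1)).const_mul _
    · exact (integrable_J hχ (by linarith : (0:ℝ) < p + 2)).const_mul _
  have hcont : ContinuousWithinAt f (Set.Ici 0) 0 := by
    apply Continuous.continuousWithinAt
    exact Real.continuous_sinh.mul
      (continuous_u.rpow_const fun t => Or.inl (hupos t).ne')
  have htend : Tendsto f atTop (nhds 0) := by
    apply squeeze_zero_norm' (a := fun t => (s / 2) ^ (-(p + 1)) * Real.exp (-p * t))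
    · filter_upwards [Filter.eventually_ge_atTop (0:ℝ)] with t ht
      rw [hf, Real.norm_eq_abs, abs_mul,
        abs_of_pos (Real.rpow_pos_of_pos (hupos t) _)]
      calc |Real.sinh t| * u t ^ (-(p + 1))
          ≤ Real.exp t * ((s / 2) ^ (-(p + 1)) * Real.exp (-(p + 1) * t)) := by
            apply mul_le_mul (abs_sinh_le_exp ht) (u_rpow_le hχ (by linarith) t)
              (Real.rpow_pos_of_pos (hupos t) _).le (Real.exp_pos t).le
        _ = (s / 2) ^ (-(p + 1)) * Real.exp (-p * t) := by
            rw [show (-(p + 1) * t) = -p * t + -t by ring, Real.exp_add, Real.exp_neg]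
            field_simp
            try ring
    · have h1 : Tendsto (fun t : ℝ => p * t) atTop atTop :=
        Filter.Tendsto.const_mul_atTop hp tendsto_id
      have h2 : Tendsto (fun t : ℝ => Real.exp (-(p * t))) atTop (nhds 0) :=
        Real.tendsto_exp_neg_atTop_nhds_zero.comp h1
      have h3 := h2.const_mul ((s / 2) ^ (-(p + 1)))
      simpa [neg_mul] using h3
  have h0 := MeasureTheory.integral_Ioi_of_hasDerivAt_of_tendsto hcont
    (fun t _ => hderiv t) hgInt htend
  have hf0 : f 0 = 0 := by rw [hf]; simp
  rw [hf0, sub_zero] at h0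
  have hgval : (∫ t in Set.Ioi (0:ℝ), g t) = (1 / s) *
      (-p * J p χ + (2 * p + 1) * χ * J (p + 1) χ - (p + 1) * J (p + 2) χ) := by
    have i1 : Integrable (fun t : ℝ => -p * u t ^ (-p)) (volume.restrict (Set.Ioi 0)) :=
      (integrable_J hχ hp).const_mul (-p)
    have i2 : Integrable (fun t : ℝ => (2 * p + 1) * χ * u t ^ (-(p + 1)))
        (volume.restrict (Set.Ioi 0)) :=
      (integrable_J hχ (by linarith : (0:ℝ) < p + 1)).const_mul ((2 * p + 1) * χ)
    have i3 : Integrable (fun t : ℝ => (p + 1) * u t ^ (-(p + 2)))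
        (volume.restrict (Set.Ioi 0)) :=
      (integrable_J hχ (by linarith : (0:ℝ) < p + 2)).const_mul (p + 1)
    have i12 : Integrable
        (fun t : ℝ => -p * u t ^ (-p) + (2 * p + 1) * χ * u t ^ (-(p + 1)))
        (volume.restrict (Set.Ioi 0)) := i1.add i2
    simp only [hg]
    rw [MeasureTheory.integral_const_mul]
    congr 1
    have e4 : (∫ t in Set.Ioi (0:ℝ),
        (-p * u t ^ (-p) + (2 * p + 1) * χ * u t ^ (-(p + 1)) - (p + 1) * u t ^ (-(p + 2)))) =
        (∫ t in Set.Ioi (0:ℝ), (-p * u t ^ (-p) + (2 * p + 1) * χ * u t ^ (-(p + 1)))) -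
          ∫ t in Set.Ioi (0:ℝ), (p + 1) * u t ^ (-(p + 2)) :=
      MeasureTheory.integral_sub i12 i3
    have e5 : (∫ t in Set.Ioi (0:ℝ),
        (-p * u t ^ (-p) + (2 * p + 1) * χ * u t ^ (-(p + 1)))) =
        (∫ t in Set.Ioi (0:ℝ), -p * u t ^ (-p)) +
          ∫ t in Set.Ioi (0:ℝ), (2 * p + 1) * χ * u t ^ (-(p + 1)) :=
      MeasureTheory.integral_add i1 i2
    rw [e4, e5, MeasureTheory.integral_const_mul, MeasureTheory.integral_const_mul,
      MeasureTheory.integral_const_mul]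
    rfl
  rw [hgval] at h0
  have hsne : s ≠ 0 := hs.ne'
  field_simp at h0
  linarith

end ModalAux

set_option maxHeartbeats 1000000 in
open ModalAux Real in
theorem modalGreen_deriv_x (n : ℕ) (hn : 1 ≤ n) (r r₁ x : ℝ) (hr : 0 < r) (hr₁ : 0 < r₁)
    (hρ : 0 < (r - r₁) ^ 2 + x ^ 2) :
    deriv (fun y : ℝ => modalGreenQ n r r₁ y) x =
      ((n : ℝ) - 1 / 2) *
        ((modalGreenQ n r r₁ x + modalGreenQ (n - 1) r r₁ x) * x / ((r + r₁) ^ 2 + x ^ 2)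
          + (modalGreenQ n r r₁ x - modalGreenQ (n - 1) r r₁ x) * x / ((r - r₁) ^ 2 + x ^ 2)) := by
  have hrr : 0 < r * r₁ := mul_pos hr hr₁
  have hn1 : (1:ℝ) ≤ (n:ℝ) := by exact_mod_cast hn
  set χx : ℝ := (r ^ 2 + r₁ ^ 2 + x ^ 2) / (2 * r * r₁) with hχdef
  have hχ : 1 < χx := by
    rw [hχdef, lt_div_iff₀ (by positivity)]
    nlinarith
  set C : ℝ := 2 * Real.pi * Real.sqrt (r * r₁) with hC
  have hCpos : 0 < C := by
    rw [hC]
    have := Real.pi_pos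
    have := Real.sqrt_pos.2 hrr
    positivity
  have hp : (0:ℝ) < (n:ℝ) + 1/2 := by linarith
  have hp0 : (0:ℝ) < (n:ℝ) - 1/2 := by linarith
  have hchain : HasDerivAt (fun y : ℝ => (r ^ 2 + r₁ ^ 2 + y ^ 2) / (2 * r * r₁))
      (x / (r * r₁)) x := by
    have h1 : HasDerivAt (fun y : ℝ => r ^ 2 + r₁ ^ 2 + y ^ 2) (2 * x) x := by
      simpa using (hasDerivAt_pow 2 x).const_add (r ^ 2 + r₁ ^ 2)
    have h2 := h1.div_const (2 * r * r₁)
    refine h2.congr_deriv (Eq.symm ?_)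
    field_simp
  have hJd := (hasDerivAt_J hχ hp).comp x hchain
  have hfun : (fun y : ℝ => modalGreenQ n r r₁ y) =
      fun y => ((fun z => J ((n:ℝ) + 1/2) z) ∘
        fun y : ℝ => (r ^ 2 + r₁ ^ 2 + y ^ 2) / (2 * r * r₁)) y / C := by
    funext y
    simp only [Function.comp, modalGreenQ, legendreQhalf_eq, hC]
  rw [hfun, (hJd.div_const C).deriv]
  have hGn : modalGreenQ n r r₁ x = J ((n:ℝ) + 1/2) χx / C := by
    simp only [modalGreenQ, legendreQhalf_eq, hC, hχdef]
  have hcast : ((n - 1 : ℕ) : ℝ) + 1/2 = (n:ℝ) - 1/2 := by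
    rw [Nat.cast_sub hn]; push_cast; ring
  have hGm : modalGreenQ (n - 1) r r₁ x = J ((n:ℝ) - 1/2) χx / C := by
    simp only [modalGreenQ, legendreQhalf_eq, hC, hχdef, hcast]
  rw [hGn, hGm]
  have hrec := J_rec hχ hp0
  rw [show (n:ℝ) - 1/2 + 2 = (n:ℝ) + 1/2 + 1 by ring,
    show (n:ℝ) - 1/2 + 1 = (n:ℝ) + 1/2 by ring] at hrec
  set A : ℝ := J ((n:ℝ) + 1/2) χx with hA
  set B : ℝ := J ((n:ℝ) - 1/2) χx with hB
  set A2 : ℝ := J ((n:ℝ) + 1/2 + 1) χx with hA2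
  have hnz : ((n:ℝ) + 1/2) ≠ 0 := hp.ne'
  have hA2val : A2 = (2 * (n:ℝ) * χx * A - ((n:ℝ) - 1/2) * B) / ((n:ℝ) + 1/2) := by
    rw [eq_div_iff hnz]
    linear_combination hrec
  rw [hA2val]
  have hρp : ((r + r₁) ^ 2 + x ^ 2) ≠ 0 := by positivity
  have hρm : ((r - r₁) ^ 2 + x ^ 2) ≠ 0 := hρ.ne'
  have hχ2 : χx ^ 2 - 1 ≠ 0 := (sq_sub_pos hχ).ne'
  have hCne : C ≠ 0 := hCpos.ne'
  -- step 1: rewrite the derivative using the recurrence (pure algebra in χx)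
  have step1 : -(((n:ℝ) + 1/2) / (χx ^ 2 - 1)) *
        (χx * A - (2 * (n:ℝ) * χx * A - ((n:ℝ) - 1/2) * B) / ((n:ℝ) + 1/2)) *
        (x / (r * r₁)) / C =
      ((n:ℝ) - 1/2) * (χx * A - B) * x / ((χx ^ 2 - 1) * (r * r₁)) / C := by
    field_simp
    ring
  have h2rr : (2 * r * r₁) ≠ 0 := by positivity
  have hval : χx ^ 2 - 1 =
      ((r + r₁) ^ 2 + x ^ 2) * ((r - r₁) ^ 2 + x ^ 2) / (2 * r * r₁) ^ 2 := by
    rw [hχdef]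
    field_simp
    ring
  have key2 : ((n:ℝ) - 1/2) * (χx * A - B) * x / ((χx ^ 2 - 1) * (r * r₁)) =
      ((n:ℝ) - 1/2) * ((A + B) * x / ((r + r₁) ^ 2 + x ^ 2)
        + (A - B) * x / ((r - r₁) ^ 2 + x ^ 2)) := by
    rw [hval, hχdef]
    field_simp
    ring
  rw [step1, key2]
  ring
end
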